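/- arXiv:1801.04809 — 2 statements merged into one kernel-verified Lean document; each statement's English description precedes it below -/
import Mathlib

section
/- Let R and S be Dyck paths of the same length 2n, both avoiding three consecutive north steps NNN. Then Type(R) = Type(S) if and only if cls(φ(R)) = cls(φ(S)). -/
/-- Steps: north `N = (0,1)`, east `E = (1,0)`, diagonal `D = (1,1)`. -/
inductive MStep : Type
  | N | E | D
  deriving DecidableEq

/-- The contribution of a step to the height `y - x` above the diagonal. -/
def MStep.hdiff : MStep → ℤ
  | .N => 1
  | .E => -1
  | .D => 0

/-- The total height change `y - x` along a word of steps. -/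
def wsum (p : List MStep) : ℤ := (p.map MStep.hdiff).sum

/-- A (nonempty) Motzkin path: starts at the origin, never goes below the
diagonal `y = x`, and ends on the diagonal. -/
def IsMotzkin (p : List MStep) : Prop :=
  p ≠ [] ∧ (∀ q, q <+: p → 0 ≤ wsum q) ∧ wsum p = 0

/-- A Dyck path is a Motzkin path with no diagonal step. -/
def IsDyck (p : List MStep) : Prop := IsMotzkin p ∧ MStep.D ∉ p

/-- A path is primitive if it touches the diagonal only at its endpoints. -/
def IsPrimitive (p : List MStep) : Prop :=
  IsMotzkin p ∧ ∀ q, q <+: p → q ≠ [] → q ≠ p → 0 < wsum q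

/-- Covering relation for the Tamari-type order on Motzkin paths:
`Q` covers `P` iff `P = P₁·E·P₂·P₃` and `Q = P₁·P₂·E·P₃` with `P₂` a nonempty
primitive Motzkin path. -/
def MCover (P Q : List MStep) : Prop :=
  ∃ P₁ P₂ P₃ : List MStep, IsMotzkin P₂ ∧ IsPrimitive P₂ ∧
    P = P₁ ++ [MStep.E] ++ P₂ ++ P₃ ∧ Q = P₁ ++ P₂ ++ [MStep.E] ++ P₃

/-- Covering relation of the Tamari order on Dyck paths. -/
def DCover (P Q : List MStep) : Prop :=
  ∃ P₁ P₂ P₃ : List MStep, IsDyck P₂ ∧ IsPrimitive P₂ ∧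
    P = P₁ ++ [MStep.E] ++ P₂ ++ P₃ ∧ Q = P₁ ++ P₂ ++ [MStep.E] ++ P₃

/-- The partial order `≤_M` on Motzkin paths. -/
def MLE : List MStep → List MStep → Prop := Relation.ReflTransGen MCover

/-- The Tamari order `≤_D` on Dyck paths. -/
def DLE : List MStep → List MStep → Prop := Relation.ReflTransGen DCover

/-- Heights of the diagonal steps along a path, starting from height `h`. -/
def clsFrom : List MStep → ℤ → List ℤ
  | [], _ => []
  | .N :: rest, h => clsFrom rest (h + 1)
  | .E :: rest, h => clsFrom rest h
  | .D :: rest, h => (h + 1) :: clsFrom rest (h + 1)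

/-- The class of a Motzkin path: the sequence of heights (ending `y`-coordinates)
of its diagonal steps, in the order they occur. -/
def cls (p : List MStep) : List ℤ := clsFrom p 0

/-- A path avoids `NNN` if it has no three consecutive north steps. -/
def AvoidsNNN (p : List MStep) : Prop := ¬ ([MStep.N, MStep.N, MStep.N] <:+: p)

/-- Callan's bijection `φ`: replace each factor `NE` by `D` and each factor
`NNE` by `N`, leaving remaining east steps unchanged. -/
def phi : List MStep → List MStep
  | [] => []
  | .N :: .N :: .E :: rest => .N :: phi rest
  | .N :: .E :: rest => .D :: phi rest
  | s :: rest => s :: phi rest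

/-- The inverse of `φ`: replace each `D` by `NE` and each `N` by `NNE`. -/
def psi : List MStep → List MStep
  | [] => []
  | .N :: rest => .N :: .N :: .E :: psi rest
  | .D :: rest => .N :: .E :: psi rest
  | .E :: rest => .E :: psi rest

/-- For each north step of the path (in order), record `N` if it is immediately
followed by an east step and `E` otherwise. -/
def typeRaw : List MStep → List MStep
  | [] => []
  | .N :: rest => (if rest.head? = some MStep.E then MStep.N else MStep.E) :: typeRaw rest
  | _ :: rest => typeRaw rest

/-- The type of a Dyck path of length `2n`: the word of length `n - 1` whose
`i`-th letter is `N` iff the `i`-th north step is immediately followed by an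
east step (the letter of the last north step is dropped). -/
def typeW (p : List MStep) : List MStep := (typeRaw p).dropLast

/-- `ds p` is the number of north steps of `p` that are neither immediately
preceded nor immediately followed by another north step. -/
def ds (p : List MStep) : ℕ :=
  ((Finset.range p.length).filter (fun i =>
    p[i]? = some MStep.N ∧ p[i + 1]? ≠ some MStep.N ∧
      (i = 0 ∨ p[i - 1]? ≠ some MStep.N))).card

/-- The number of contacts of a path with the diagonal `y = x` (lattice points
of the path lying on the diagonal, endpoints included). -/
def cont (p : List MStep) : ℕ :=
  ((Finset.range (p.length + 1)).filter (fun i => wsum (p.take i) = 0)).card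

/-! An `NNN`-avoiding Dyck path factors uniquely into the blocks `E`, `NE`, `NNE`; `φ` sends
them to `E`, `D`, `N`, and they contribute nothing, `N`, `EN` to the type. So the class of `φ(R)`
is a function of `typeRaw R`, a word in the blocks `N` and `EN`: a block `N` records the height
reached so far plus one, a block `EN` only raises the height. The recorded heights increase
strictly, so among words of equal length (here `n`, the number of north steps) this function
is injective. Since these words end in `N`, dropping that last letter, which is how `Type` is
obtained, loses nothing. -/

inductive IsBlockWord : List MStep → Prop
  | nil : IsBlockWord []
  | cons_E {p} : IsBlockWord p → IsBlockWord (.E :: p)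
  | cons_NE {p} : IsBlockWord p → IsBlockWord (.N :: .E :: p)
  | cons_NNE {p} : IsBlockWord p → IsBlockWord (.N :: .N :: .E :: p)

inductive IsTypeWord : List MStep → Prop
  | nil : IsTypeWord []
  | cons_N {t} : IsTypeWord t → IsTypeWord (.N :: t)
  | cons_EN {t} : IsTypeWord t → IsTypeWord (.E :: .N :: t)

def clsOfType : List MStep → ℤ → List ℤ
  | [], _ => []
  | .E :: .N :: t, h => clsOfType t (h + 1)
  | .N :: t, h => (h + 1) :: clsOfType t (h + 1)
  | _ :: t, h => clsOfType t h

theorem AvoidsNNN.of_cons {x : MStep} {p : List MStep} (h : AvoidsNNN (x :: p)) :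
    AvoidsNNN p :=
  fun hp => h (hp.trans (List.suffix_cons x p).isInfix)

theorem List.getLast?_ne_of_cons {α : Type*} {a x : α} {l : List α}
    (h : (x :: l).getLast? ≠ some a) : l.getLast? ≠ some a := by
  intro hl
  rw [List.getLast?_cons, hl] at h
  exact h rfl

theorem isBlockWord_of_avoidsNNN : ∀ {p : List MStep}, MStep.D ∉ p → AvoidsNNN p →
    p.getLast? ≠ some .N → IsBlockWord p
  | [], _, _, _ => .nil
  | .E :: _, hD, hA, hl =>
    .cons_E (isBlockWord_of_avoidsNNN (by simp_all) hA.of_cons (List.getLast?_ne_of_cons hl))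
  | .N :: .E :: _, hD, hA, hl =>
    .cons_NE (isBlockWord_of_avoidsNNN (by simp_all) hA.of_cons.of_cons
      (List.getLast?_ne_of_cons (List.getLast?_ne_of_cons hl)))
  | .N :: .N :: .E :: _, hD, hA, hl =>
    .cons_NNE (isBlockWord_of_avoidsNNN (by simp_all) hA.of_cons.of_cons.of_cons
      (List.getLast?_ne_of_cons (List.getLast?_ne_of_cons (List.getLast?_ne_of_cons hl))))
  | .N :: .N :: .N :: p, _, hA, _ => (hA (List.prefix_append [.N, .N, .N] p).isInfix).elim
  | [.N], _, _, hl | [.N, .N], _, _, hl => absurd rfl hl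
  | .D :: _, hD, _, _ | .N :: .D :: _, hD, _, _ | .N :: .N :: .D :: _, hD, _, _ => by simp at hD

namespace IsBlockWord

variable {p : List MStep}

theorem isTypeWord_typeRaw (hp : IsBlockWord p) : IsTypeWord (typeRaw p) := by
  induction hp with
  | nil => exact .nil
  | cons_E _ ih => simpa [typeRaw] using ih
  | cons_NE _ ih => simpa [typeRaw] using ih.cons_N
  | cons_NNE _ ih => simpa [typeRaw] using ih.cons_EN

theorem clsFrom_phi (hp : IsBlockWord p) (h : ℤ) :
    clsFrom (phi p) h = clsOfType (typeRaw p) h := by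
  induction hp generalizing h with
  | nil => rfl
  | cons_E _ ih => simp [phi, typeRaw, clsFrom, ih]
  | cons_NE _ ih => simp [phi, typeRaw, clsFrom, clsOfType, ih]
  | cons_NNE _ ih => simp [phi, typeRaw, clsFrom, clsOfType, ih]

end IsBlockWord

theorem lt_of_mem_clsOfType {t : List MStep} {h x : ℤ} (hx : x ∈ clsOfType t h) : h < x := by
  induction t, h using clsOfType.induct with
  | case1 => simp [clsOfType] at hx
  | case2 t h ih => have := ih (by simpa [clsOfType] using hx); omega
  | case3 t h ih =>
    rcases List.mem_cons.1 (by simpa [clsOfType] using hx) with rfl | hx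
    · omega
    · have := ih hx; omega
  | case4 s t h hEN hN ih => exact ih (by rwa [clsOfType.eq_4 _ _ _ hEN hN] at hx)

namespace IsTypeWord

variable {t t' : List MStep}

theorem getLast_eq (ht : IsTypeWord t) (hne : t ≠ []) : t.getLast hne = .N := by
  have cons_N : ∀ {t : List MStep}, (∀ hne : t ≠ [], t.getLast hne = .N) →
      ∀ hne : MStep.N :: t ≠ [], (MStep.N :: t).getLast hne = .N := by
    intro t ih _
    obtain rfl | ht := eq_or_ne t []
    · rfl
    · rw [List.getLast_cons ht, ih]
  induction ht with
  | nil => exact absurd rfl hne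
  | cons_N _ ih => exact cons_N ih hne
  | cons_EN _ ih => rw [List.getLast_cons_cons, cons_N ih]

theorem dropLast_inj (ht : IsTypeWord t) (ht' : IsTypeWord t') (hlen : t.length = t'.length) :
    t.dropLast = t'.dropLast ↔ t = t' := by
  refine ⟨fun h => ?_, congrArg _⟩
  obtain rfl | hne := eq_or_ne t []
  · exact (List.length_eq_zero_iff.1 hlen.symm).symm
  have hne' : t' ≠ [] := by rintro rfl; exact hne (List.length_eq_zero_iff.1 hlen)
  rw [← List.dropLast_concat_getLast hne, ← List.dropLast_concat_getLast hne', h,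
    ht.getLast_eq, ht'.getLast_eq]

theorem clsOfType_inj (ht : IsTypeWord t) (ht' : IsTypeWord t') (hlen : t.length = t'.length)
    (h : ℤ) : clsOfType t h = clsOfType t' h ↔ t = t' := by
  refine ⟨fun heq => ?_, fun heq => heq ▸ rfl⟩
  induction ht generalizing t' h with
  | nil => exact (List.length_eq_zero_iff.1 hlen.symm).symm
  | cons_N _ ih =>
    cases ht' with
    | nil => simp at hlen
    | cons_N ht' =>
      simp only [clsOfType, List.cons.injEq, true_and] at heq
      rw [ih ht' (by simpa using hlen) _ heq]
    | cons_EN ht' =>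
      simp only [clsOfType] at heq
      exact absurd (lt_of_mem_clsOfType (heq ▸ List.mem_cons_self)) (lt_irrefl _)
  | cons_EN _ ih =>
    cases ht' with
    | nil => simp at hlen
    | cons_N ht' =>
      simp only [clsOfType] at heq
      exact absurd (lt_of_mem_clsOfType (heq.symm ▸ List.mem_cons_self)) (lt_irrefl _)
    | cons_EN ht' =>
      simp only [clsOfType] at heq
      rw [ih ht' (by simpa using hlen) _ heq]

end IsTypeWord

theorem wsum_eq_count_sub_count (p : List MStep) : wsum p = p.count .N - p.count .E := by
  induction p with
  | nil => rfl
  | cons a p ih => cases a <;> simp [wsum, MStep.hdiff] at ih ⊢ <;> omega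

theorem length_eq_count_add_count (p : List MStep) :
    p.length = p.count .N + p.count .E + p.count .D := by
  induction p with
  | nil => rfl
  | cons a p ih => cases a <;> simp [ih] <;> omega

theorem length_typeRaw (p : List MStep) : (typeRaw p).length = p.count .N := by
  induction p with
  | nil => rfl
  | cons a p ih => cases a <;> simp [typeRaw, ih]

namespace IsDyck

variable {p : List MStep}

theorem getLast?_ne_N (hp : IsDyck p) : p.getLast? ≠ some .N := by
  intro hl
  obtain ⟨q, rfl⟩ := List.getLast?_eq_some_iff.1 hl
  have hq := hp.1.2.1 q (List.prefix_append _ _)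
  have := hp.1.2.2
  simp [wsum, MStep.hdiff] at hq this
  omega

theorem count_N {n : ℕ} (hp : IsDyck p) (hlen : p.length = 2 * n) : p.count .N = n := by
  have hsum := hp.1.2.2
  rw [wsum_eq_count_sub_count] at hsum
  have := length_eq_count_add_count p
  rw [List.count_eq_zero_of_not_mem hp.2] at this
  omega

end IsDyck

/-- For Dyck paths `R, S` of the same length `2n` avoiding
`NNN`, one has `Type(R) = Type(S)` iff `cls (φ R) = cls (φ S)`. -/
theorem type_eq_iff_cls_eq (n : ℕ) (R S : List MStep)
    (hR : IsDyck R) (hS : IsDyck S)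
    (hRn : R.length = 2 * n) (hSn : S.length = 2 * n)
    (hRa : AvoidsNNN R) (hSa : AvoidsNNN S) :
    typeW R = typeW S ↔ cls (phi R) = cls (phi S) := by
  have hbR := isBlockWord_of_avoidsNNN hR.2 hRa hR.getLast?_ne_N
  have hbS := isBlockWord_of_avoidsNNN hS.2 hSa hS.getLast?_ne_N
  have htR := hbR.isTypeWord_typeRaw
  have htS := hbS.isTypeWord_typeRaw
  have hlen : (typeRaw R).length = (typeRaw S).length := by
    rw [length_typeRaw, length_typeRaw, hR.count_N hRn, hS.count_N hSn]
  rw [typeW, typeW, htR.dropLast_inj htS hlen, cls, cls, hbR.clsFrom_phi, hbS.clsFrom_phi,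
    htR.clsOfType_inj htS hlen]
end

section
/- Let R be a Dyck path avoiding three consecutive north steps NNN, and let P = φ(R) be the corresponding Motzkin path. Then R is primitive if and only if P is primitive. -/
@[simp] lemma wsum_nil : wsum [] = 0 := rfl

@[simp] lemma wsum_cons (s : MStep) (t : List MStep) : wsum (s :: t) = s.hdiff + wsum t := by
  simp [wsum]

@[simp] lemma wsum_append (s t : List MStep) : wsum (s ++ t) = wsum s + wsum t := by
  simp [wsum]

lemma List.prefix_append_cases {α : Type*} {r b t : List α} (h : r <+: b ++ t) :
    (r <+: b ∧ r ≠ b) ∨ ∃ r', r = b ++ r' ∧ r' <+: t := by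
  rcases List.prefix_or_prefix_of_prefix h (List.prefix_append b t) with hb | ⟨r', rfl⟩
  · by_cases hrb : r = b
    · exact .inr ⟨[], by simp [hrb], List.nil_prefix⟩
    · exact .inl ⟨hb, hrb⟩
  · exact .inr ⟨r', rfl, (List.prefix_append_right_inj b).1 h⟩

lemma phi_eq_nil_iff {p : List MStep} : phi p = [] ↔ p = [] := by
  induction p using phi.induct with
  | case1 | case2 | case3 => simp [phi]
  | case4 s rest h1 h2 _ => simp [phi.eq_4 s rest h1 h2]

lemma wsum_phi (p : List MStep) : wsum (phi p) = wsum p := by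
  induction p using phi.induct with
  | case1 => rfl
  | case2 rest ih | case3 rest ih => simp [phi, ih, MStep.hdiff]
  | case4 s rest h1 h2 ih => simp [phi.eq_4 s rest h1 h2, ih]

lemma exists_phi_block {p : List MStep} (hp : p ≠ []) :
    ∃ b rest x, b ≠ [] ∧ p = b ++ rest ∧ phi p = x :: phi rest ∧ wsum b = x.hdiff ∧
      ∀ r, r <+: b → r ≠ [] → r ≠ b → 0 < wsum r := by
  induction p using phi.induct with
  | case1 => exact absurd rfl hp
  | case2 rest _ =>
    refine ⟨[.N, .N, .E], rest, .N, by simp, rfl, rfl, rfl, ?_⟩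
    simp +contextual [List.prefix_cons_iff, MStep.hdiff, or_imp]
  | case3 rest _ =>
    refine ⟨[.N, .E], rest, .D, by simp, rfl, rfl, rfl, ?_⟩
    simp +contextual [List.prefix_cons_iff, MStep.hdiff, or_imp]
  | case4 s rest h1 h2 _ =>
    refine ⟨[s], rest, s, by simp, rfl, phi.eq_4 s rest h1 h2, by simp, ?_⟩
    simp +contextual [List.prefix_cons_iff]

theorem exists_prefix_wsum_eq_of_prefix_phi (p q : List MStep) (hq : q <+: phi p)
    (hq₀ : q ≠ []) (hqp : q ≠ phi p) :
    ∃ r, r <+: p ∧ r ≠ [] ∧ r ≠ p ∧ wsum r = wsum q := by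
  by_cases hp : p = []
  · subst hp
    exact absurd (List.prefix_nil.1 hq) hq₀
  obtain ⟨b, rest, x, hb, rfl, hphi, hwb, -⟩ := exists_phi_block hp
  rw [hphi] at hq hqp
  obtain rfl | ⟨t, rfl, ht⟩ := List.prefix_cons_iff.1 hq
  · exact absurd rfl hq₀
  have ht_ne : t ≠ phi rest := by rintro rfl; exact hqp rfl
  by_cases ht₀ : t = []
  · subst ht₀
    have hrest : rest ≠ [] := by rintro rfl; exact ht_ne rfl
    exact ⟨b, List.prefix_append b rest, hb, by simpa using hrest, by simp [hwb]⟩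
  have : rest.length < (b ++ rest).length := by simp [List.length_pos_iff.2 hb]
  obtain ⟨r, hr, hr₀, hr_ne, hwr⟩ := exists_prefix_wsum_eq_of_prefix_phi rest t ht ht₀ ht_ne
  refine ⟨b ++ r, (List.prefix_append_right_inj b).2 hr, by simp [hb], by simpa using hr_ne, ?_⟩
  simp [hwb, hwr]
termination_by p.length

theorem pos_or_exists_prefix_phi_wsum_le (p r : List MStep) (hr : r <+: p)
    (hr₀ : r ≠ []) (hrp : r ≠ p) :
    0 < wsum r ∨ ∃ q, q <+: phi p ∧ q ≠ [] ∧ q ≠ phi p ∧ wsum q ≤ wsum r := by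
  by_cases hp : p = []
  · subst hp
    exact absurd (List.prefix_nil.1 hr) hr₀
  obtain ⟨b, rest, x, hb, rfl, hphi, hwb, hblock⟩ := exists_phi_block hp
  rw [hphi]
  rcases List.prefix_append_cases hr with ⟨hrb, hrb'⟩ | ⟨r', rfl, hr'⟩
  · exact .inl (hblock r hrb hr₀ hrb')
  have hrest : rest ≠ [] := by rintro rfl; simp_all
  have hx : [x] <+: x :: phi rest ∧ [x] ≠ [] ∧ [x] ≠ x :: phi rest := by
    simp [phi_eq_nil_iff, hrest]
  by_cases hr'₀ : r' = []
  · subst hr'₀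
    exact .inr ⟨[x], hx.1, hx.2.1, hx.2.2, by simp [hwb]⟩
  have hr'_ne : r' ≠ rest := by rintro rfl; exact hrp rfl
  have : rest.length < (b ++ rest).length := by simp [List.length_pos_iff.2 hb]
  rcases pos_or_exists_prefix_phi_wsum_le rest r' hr' hr'₀ hr'_ne with
    hpos | ⟨q, hq, hq₀, hq_ne, hwq⟩
  · refine .inr ⟨[x], hx.1, hx.2.1, hx.2.2, ?_⟩
    simp only [wsum_cons, wsum_nil, wsum_append, hwb]
    omega
  · refine .inr ⟨x :: q, List.cons_prefix_cons.2 ⟨rfl, hq⟩, List.cons_ne_nil _ _,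
      by simpa using hq_ne, ?_⟩
    simp only [wsum_cons, wsum_append, hwb]
    omega
termination_by p.length

theorem isMotzkin_phi {p : List MStep} (hp : IsMotzkin p) : IsMotzkin (phi p) := by
  obtain ⟨hp₀, hpos, hsum⟩ := hp
  refine ⟨by simpa [phi_eq_nil_iff] using hp₀, fun q hq => ?_, by rwa [wsum_phi]⟩
  by_cases hq₀ : q = []
  · simp [hq₀]
  by_cases hqp : q = phi p
  · simp [hqp, wsum_phi, hsum]
  obtain ⟨r, hr, -, -, hwr⟩ := exists_prefix_wsum_eq_of_prefix_phi p q hq hq₀ hqp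
  exact hwr ▸ hpos r hr

theorem isPrimitive_phi {p : List MStep} (hp : IsPrimitive p) : IsPrimitive (phi p) := by
  refine ⟨isMotzkin_phi hp.1, fun q hq hq₀ hqp => ?_⟩
  obtain ⟨r, hr, hr₀, hrp, hwr⟩ := exists_prefix_wsum_eq_of_prefix_phi p q hq hq₀ hqp
  exact hwr ▸ hp.2 r hr hr₀ hrp

theorem isPrimitive_of_isPrimitive_phi {p : List MStep} (hp : IsMotzkin p)
    (h : IsPrimitive (phi p)) : IsPrimitive p := by
  refine ⟨hp, fun r hr hr₀ hrp => ?_⟩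
  rcases pos_or_exists_prefix_phi_wsum_le p r hr hr₀ hrp with hpos | ⟨q, hq, hq₀, hqp, hwq⟩
  · exact hpos
  · exact (h.2 q hq hq₀ hqp).trans_le hwq

theorem phi_primitive_general (R : List MStep) (hR : IsDyck R) :
    IsPrimitive R ↔ IsPrimitive (phi R) :=
  ⟨isPrimitive_phi, isPrimitive_of_isPrimitive_phi hR.1⟩

/-- A Dyck path `R` avoiding `NNN` is primitive iff the
Motzkin path `φ R` is primitive. -/
theorem phi_primitive (R : List MStep) (hR : IsDyck R) (hRa : AvoidsNNN R) :
    IsPrimitive R ↔ IsPrimitive (phi R) :=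
  phi_primitive_general R hR
end
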